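/- In the triangle model over F₂ (A = F₂(Z₃), Ω¹ free on e⁺, e⁻ with e± f = R±(f)e±, Ω(Z₃) relations (e±)² = 0 and e⁺∧e⁻ + e⁻∧e⁺ = 0, metric g = e⁺⊗e⁻ + e⁻⊗e⁺): for each pair of constants α, β ∈ F₂, the connection ∇e⁺ = α e⁻⊗e⁻, ∇e⁻ = β e⁺⊗e⁺ with σ = flip is a quantum Levi-Civita connection, and its curvature R∇(e±) = (d⊗id + id∧∇)∇e± equals αβ·Vol⊗e±, where Vol = e⁺∧e⁻. In particular, the connection is flat if and only if αβ = 0. -/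

import Mathlib

/- The triangle model over F₂: A = F₂(Z₃), Ω¹ free on e⁺, e⁻ (index `true` for
+, `false` for −), Ω(Z₃) relations (e±)² = 0, e⁺∧e⁻ = e⁻∧e⁺ = Vol, de± = 0,
metric g = e⁺⊗e⁻ + e⁻⊗e⁺. 1-forms are `c : Bool → A` (coefficients of e^a),
2-tensors `c : Bool → Bool → A`, 3-tensors `c : Bool → Bool → Bool → A`. -/

/-- The algebra `A = F₂(Z₃)`. -/
abbrev Alg := ZMod 3 → ZMod 2

/-- `∂₊ f = R₊f + f`, `∂₋ f = R₋f + f`, where `(R±f)(i) = f(i±1)`. -/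
def pd (b : Bool) (f : Alg) : Alg :=
  fun i => (if b then f (i + 1) else f (i - 1)) + f i

/-- The connection `∇e⁺ = α e⁻⊗e⁻`, `∇e⁻ = β e⁺⊗e⁺`, extended by the Leibniz
rule to `∇(f⁺e⁺ + f⁻e⁻)`; component `(a,b)` of the output. -/
def nabla1 (α β : ZMod 2) (c : Bool → Alg) : Bool → Bool → Alg :=
  fun a b => pd a (c b) +
    (match a, b with
      | false, false => fun i => α * c true i
      | true, true => fun i => β * c false i
      | _, _ => 0)

/-- `σ` = flip on tensor products of `e⁺, e⁻`. -/
def sigma (c : Bool → Bool → Alg) : Bool → Bool → Alg := fun a b => c b a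

/-- Wedge to `Ω² = A·Vol`: `e⁺∧e⁻ = e⁻∧e⁺ = Vol`, `(e±)² = 0`. -/
def wedge (c : Bool → Bool → Alg) : Alg := c true false + c false true

/-- `d` on 1-forms: `d(f⁺e⁺ + f⁻e⁻) = (∂₋f⁺ + ∂₊f⁻)·Vol` (as `de± = 0`). -/
def dOm (c : Bool → Alg) : Alg := pd false (c true) + pd true (c false)

/-- The tensor product connection
`∇₂(f e^a⊗e^b) = ∇(f e^a)⊗e^b + (σ⊗id)(f e^a ⊗ ∇e^b)`; component `(u,v,w)`. -/
def nabla2 (α β : ZMod 2) (c : Bool → Bool → Alg) : Bool → Bool → Bool → Alg :=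
  fun u v w => pd u (c v w) +
    (if u = false ∧ v = false then fun i => α * c true w i else 0) +
    (if u = true ∧ v = true then fun i => β * c false w i else 0) +
    (if u = false ∧ w = false then fun i => α * c v true i else 0) +
    (if u = true ∧ w = true then fun i => β * c v false i else 0)

/-- The unique quantum metric `g = e⁺⊗e⁻ + e⁻⊗e⁺`. -/
def gMet : Bool → Bool → Alg := fun a b => if a ≠ b then 1 else 0

/-- The curvature `R∇ = (d⊗id + id∧∇)∇` on a 1-form `c`, valued in
`Ω²⊗Ω¹ = A·Vol⊗Ω¹`; component `w` is the coefficient of `Vol⊗e^w`. -/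
def curv (α β : ZMod 2) (c : Bool → Alg) : Bool → Alg :=
  fun w => pd false (nabla1 α β c true w) + pd true (nabla1 α β c false w) +
    (if w then fun i => β * nabla1 α β c false false i
     else fun i => α * nabla1 α β c true true i)

/-- The basis 1-forms `e⁺` (`s = true`) and `e⁻` (`s = false`). -/
def ebasis (s : Bool) : Bool → Alg := fun b => if b = s then 1 else 0

/-! The Christoffel symbols of `∇` only sit in `e⁻⊗e⁻` and `e⁺⊗e⁺`, which the wedge kills, so `∇`
is torsion free. In `∇g` every Christoffel term occurs twice, and the derivatives of the constant
coefficients of `g` vanish, so in characteristic two `∇g = 0`. In the curvature, the second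
derivatives appear as `∂₋∂₊ + ∂₊∂₋`, which vanishes because the two shifts commute, and the
mixed terms `∂(βf) + β∂f` cancel as well; what survives is `R∇ = αβ·Vol⊗id`, a left module map. -/

theorem pd_add (b : Bool) (f g : Alg) : pd b (f + g) = pd b f + pd b g := by
  funext i
  cases b <;> simp [pd] <;> ring

theorem pd_const_mul (b : Bool) (a : ZMod 2) (f : Alg) :
    pd b (fun i => a * f i) = fun i => a * pd b f i := by
  funext i
  cases b <;> simp [pd] <;> ring

theorem pd_comm (a b : Bool) (f : Alg) : pd a (pd b f) = pd b (pd a f) := by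
  funext i
  cases a <;> cases b <;> simp [pd] <;> ring

theorem pd_false_pd_true_add (f : Alg) : pd false (pd true f) + pd true (pd false f) = 0 := by
  rw [pd_comm]
  exact CharTwo.add_self_eq_zero _

theorem wedge_nabla1 (α β : ZMod 2) (ω : Bool → Alg) : wedge (nabla1 α β ω) = dOm ω := by
  simp only [wedge, nabla1, dOm, add_zero]
  exact add_comm _ _

theorem nabla2_gMet (α β : ZMod 2) : nabla2 α β gMet = 0 := by
  funext u v w i
  cases u <;> cases v <;> cases w <;>
    simp [nabla2, gMet, pd, CharTwo.add_self_eq_zero]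

theorem curv_eq (α β : ZMod 2) (c : Bool → Alg) : curv α β c = fun w i => α * β * c w i := by
  funext w i
  have h := congr_fun (pd_false_pd_true_add (c w)) i
  cases w <;>
    simp only [curv, nabla1, pd_add, pd_const_mul, Pi.add_apply, Pi.zero_apply, add_zero,
      Bool.false_eq_true, ↓reduceIte] at h ⊢ <;>
    grind

theorem curv_ebasis (α β : ZMod 2) (s : Bool) :
    curv α β (ebasis s) = fun w => fun _ => α * β * (if w = s then 1 else 0) := by
  funext w i
  simp [curv_eq, ebasis, apply_ite (fun f : Alg => f i)]

theorem curv_eq_zero_iff (α β : ZMod 2) : (∀ c : Bool → Alg, curv α β c = 0) ↔ α * β = 0 := by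
  refine ⟨fun hflat => ?_, fun hαβ c => ?_⟩
  · simpa [curv_ebasis] using congr_fun (congr_fun (hflat (ebasis true)) true) 0
  · funext w i
    simp [curv_eq, hαβ]

/-- On the triangle with `Ω(Z₃)`: for each `α, β ∈ F₂` the connection
`∇e⁺ = α e⁻⊗e⁻`, `∇e⁻ = β e⁺⊗e⁺` with `σ` = flip is a QLC (torsion free and
metric compatible), its curvature is `R∇(e±) = αβ·Vol⊗e±`, and it is flat iff
`αβ = 0`. -/
theorem triangle_QLC_curvature (α β : ZMod 2) :
    (∀ ω : Bool → Alg, wedge (nabla1 α β ω) = dOm ω) ∧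
    nabla2 α β gMet = 0 ∧
    (∀ s : Bool, curv α β (ebasis s) = fun w => fun _ => α * β * (if w = s then 1 else 0)) ∧
    ((∀ c : Bool → Alg, curv α β c = 0) ↔ α * β = 0) :=
  ⟨wedge_nabla1 α β, nabla2_gMet α β, curv_ebasis α β, curv_eq_zero_iff α β⟩
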